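/- arXiv:2409.18859 — 5 statements merged into one kernel-verified Lean document; each statement's English description precedes it below -/
import Mathlib

section
/- Let S = {A_1, ..., A_N} be a finite subset of a metric space (X, D) selected greedily from a finite set Ŝ (starting from an arbitrary element, at each step adding the element of Ŝ maximizing the sum of distances to already selected elements). Then the average pairwise distance of S is at least half the maximum average pairwise distance over all N-element subsets of Ŝ. -/
open Finset

noncomputable def avgPairDist {X : Type*} [MetricSpace X] {N : ℕ} (f : Fin N → X) : ℝ :=
  (2 / ((N : ℝ) * ((N : ℝ) - 1))) *
    ∑ i, ∑ j ∈ Finset.univ.filter (fun j : Fin N => i < j), dist (f i) (f j)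

/-!
Let `D k = ∑_{i<k} d(x_i, x_k)` be the gain of the `k`-th greedy step. For any two candidates
`y, z`, the triangle inequality through each of the `k` earlier points and the greedy choice at
step `k` give `k · d(y, z) ≤ 2 D k`. Summing over the pairs of `s` and then over `k`, with
`∑_k k = C(N, 2)` the number of pairs, gives
`C(N, 2) · ∑_{pairs} d(s) ≤ 2 C(N, 2) · ∑_k D k = 2 C(N, 2) · ∑_{pairs} d(x)`.
-/

section

variable {X : Type*} [PseudoMetricSpace X] {N : ℕ}

lemma Fin.sum_sum_filter_lt_comm {M : Type*} [AddCommMonoid M] (f : Fin N → Fin N → M) :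
    ∑ i, ∑ j ∈ univ.filter (fun j => i < j), f i j =
      ∑ j, ∑ i ∈ univ.filter (fun i => i < j), f i j := by
  simp_rw [sum_filter]
  exact sum_comm

lemma Fin.sum_val_eq_choose_two : ∑ k : Fin N, (k : ℝ) = N.choose 2 := by
  rw [Fin.sum_univ_eq_sum_range (fun k => (k : ℝ)), ← Nat.cast_sum, Nat.choose_two_right,
    ← sum_range_id_mul_two, Nat.mul_div_cancel _ two_pos]

lemma Fin.sum_sum_filter_lt_const (c : ℝ) :
    ∑ i : Fin N, ∑ _j ∈ univ.filter (fun j => i < j), c = N.choose 2 * c := by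
  rw [Fin.sum_sum_filter_lt_comm fun _ _ => c, ← Fin.sum_val_eq_choose_two, sum_mul]
  refine sum_congr rfl fun k _ => ?_
  rw [Finset.sum_const, filter_gt_eq_Iio, Fin.card_Iio, nsmul_eq_mul]

noncomputable def pairDistSum (f : Fin N → X) : ℝ :=
  ∑ i, ∑ j ∈ univ.filter (fun j => i < j), dist (f i) (f j)

noncomputable def prefixDistSum (x : Fin N → X) (k : Fin N) (y : X) : ℝ :=
  ∑ i ∈ univ.filter (fun i => i < k), dist (x i) y

lemma pairDistSum_eq_sum_prefixDistSum (x : Fin N → X) :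
    pairDistSum x = ∑ k, prefixDistSum x k (x k) :=
  Fin.sum_sum_filter_lt_comm _

lemma mul_dist_le_prefixDistSum_add (x : Fin N → X) (k : Fin N) (y z : X) :
    (k : ℝ) * dist y z ≤ prefixDistSum x k y + prefixDistSum x k z := by
  calc (k : ℝ) * dist y z = ∑ _i ∈ univ.filter (fun i => i < k), dist y z := by
        rw [Finset.sum_const, filter_gt_eq_Iio, Fin.card_Iio, nsmul_eq_mul]
    _ ≤ ∑ i ∈ univ.filter (fun i => i < k), (dist (x i) y + dist (x i) z) :=
        sum_le_sum fun i _ => dist_triangle_left _ _ _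
    _ = prefixDistSum x k y + prefixDistSum x k z := sum_add_distrib

theorem choose_two_mul_pairDistSum_le_of_greedy {S : Set X} {x s : Fin N → X}
    (hs : ∀ i, s i ∈ S)
    (hgreedy : ∀ k, ∀ y ∈ S, prefixDistSum x k y ≤ prefixDistSum x k (x k)) :
    N.choose 2 * pairDistSum s ≤ N.choose 2 * (2 * pairDistSum x) := by
  have step (k : Fin N) :
      (k : ℝ) * pairDistSum s ≤ N.choose 2 * (2 * prefixDistSum x k (x k)) :=
    calc (k : ℝ) * pairDistSum s
        = ∑ i, ∑ j ∈ univ.filter (fun j => i < j), k * dist (s i) (s j) := by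
          simp only [pairDistSum, mul_sum]
      _ ≤ ∑ i : Fin N, ∑ _j ∈ univ.filter (fun j => i < j), 2 * prefixDistSum x k (x k) := by
        refine sum_le_sum fun i _ => sum_le_sum fun j _ => ?_
        linarith [mul_dist_le_prefixDistSum_add x k (s i) (s j), hgreedy k _ (hs i),
          hgreedy k _ (hs j)]
      _ = N.choose 2 * (2 * prefixDistSum x k (x k)) := Fin.sum_sum_filter_lt_const _
  calc N.choose 2 * pairDistSum s = ∑ k : Fin N, (k : ℝ) * pairDistSum s := by
        rw [← sum_mul, Fin.sum_val_eq_choose_two]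
    _ ≤ ∑ k, N.choose 2 * (2 * prefixDistSum x k (x k)) := sum_le_sum fun k _ => step k
    _ = N.choose 2 * (2 * pairDistSum x) := by
        rw [← mul_sum, ← mul_sum, pairDistSum_eq_sum_prefixDistSum]

end

lemma avgPairDist_eq_pairDistSum_div {X : Type*} [MetricSpace X] {N : ℕ} (f : Fin N → X) :
    avgPairDist f = pairDistSum f / N.choose 2 := by
  rw [avgPairDist, pairDistSum, Nat.cast_choose_two, div_div_eq_mul_div]
  ring

theorem greedy_average_two_approx_general {X : Type*} [MetricSpace X] (N : ℕ)
    (Shat : Finset X) (x : Fin N → X)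
    (hgreedy : ∀ k : Fin N, ∀ y ∈ Shat,
      ∑ i ∈ Finset.univ.filter (fun i : Fin N => i < k), dist (x i) y ≤
      ∑ i ∈ Finset.univ.filter (fun i : Fin N => i < k), dist (x i) (x k))
    (s : Fin N → X) (hs : ∀ i, s i ∈ Shat) :
    (1 / 2) * avgPairDist s ≤ avgPairDist x := by
  have key := choose_two_mul_pairDistSum_le_of_greedy (S := Shat) (x := x) hs hgreedy
  rw [avgPairDist_eq_pairDistSum_div, avgPairDist_eq_pairDistSum_div]
  rcases (Nat.cast_nonneg (N.choose 2) : (0 : ℝ) ≤ N.choose 2).eq_or_lt with hC | hC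
  · -- `N < 2`: both averages are `_ / 0 = 0`
    simp [← hC]
  · rw [← mul_div_assoc]
    gcongr
    linarith [le_of_mul_le_mul_left key hC]

/-- Greedy selection (maximizing the sum of distances to already selected points)
achieves a 2-approximation for the average pairwise distance. -/
theorem greedy_average_two_approx {X : Type*} [MetricSpace X] (N : ℕ) (hN : 2 ≤ N)
    (Shat : Finset X) (x : Fin N → X)
    (hmem : ∀ k, x k ∈ Shat)
    (hgreedy : ∀ k : Fin N, ∀ y ∈ Shat,
      ∑ i ∈ Finset.univ.filter (fun i : Fin N => i < k), dist (x i) y ≤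
      ∑ i ∈ Finset.univ.filter (fun i : Fin N => i < k), dist (x i) (x k))
    (s : Fin N → X) (hs : ∀ i, s i ∈ Shat) (hinj : Function.Injective s) :
    (1 / 2) * avgPairDist s ≤ avgPairDist x :=
  greedy_average_two_approx_general N Shat x hgreedy s hs
end

section
/- For the greedy selection in a metric space, at every step k < N the sum of distances from the newly chosen point x_{k+1} to the previously chosen points x_1, ..., x_k is at least kd/2, where d is the diameter of the finite ground set Ŝ. -/
open Finset

/-- At every step of the greedy selection (maximizing the sum of distances to
already selected points) from a finite set `Shat` of diameter `d`, the sum of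
distances from the newly chosen point to the previously chosen ones is at least `k * d / 2`. -/
theorem greedy_step_sum_ge_half_diameter {X : Type*} [MetricSpace X] (N : ℕ)
    (Shat : Finset X) (x : Fin N → X)
    (hmem : ∀ k, x k ∈ Shat)
    (hgreedy : ∀ k : Fin N, ∀ y ∈ Shat,
      ∑ i ∈ Finset.univ.filter (fun i : Fin N => i < k), dist (x i) y ≤
      ∑ i ∈ Finset.univ.filter (fun i : Fin N => i < k), dist (x i) (x k))
    (d : ℝ)
    (hdle : ∀ u ∈ Shat, ∀ v ∈ Shat, dist u v ≤ d)
    (hdeq : ∃ u ∈ Shat, ∃ v ∈ Shat, dist u v = d) :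
    ∀ k : Fin N, (k.val : ℝ) * d / 2 ≤
      ∑ i ∈ Finset.univ.filter (fun i : Fin N => i < k), dist (x i) (x k) := by
  intro k
  obtain ⟨u, hu, v, hv, huv⟩ := hdeq
  set s := Finset.univ.filter (fun i : Fin N => i < k) with hs
  have hcard : s.card = k.val := by
    rw [hs, show Finset.univ.filter (fun i : Fin N => i < k) = Finset.Iio k by ext i; simp, Fin.card_Iio]
  have hsum : (k.val : ℝ) * d ≤
      (∑ i ∈ s, dist (x i) u) + (∑ i ∈ s, dist (x i) v) := by
    rw [← Finset.sum_add_distrib]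
    calc (k.val : ℝ) * d = ∑ _i ∈ s, d := by rw [Finset.sum_const, hcard]; ring
    _ ≤ _ := Finset.sum_le_sum (fun i _ => by
        calc d = dist u v := huv.symm
        _ ≤ dist u (x i) + dist (x i) v := dist_triangle _ _ _
        _ = dist (x i) u + dist (x i) v := by rw [dist_comm u])
  have hu' := hgreedy k u hu
  have hv' := hgreedy k v hv
  rw [← hs] at hu' hv'
  rcases le_total (∑ i ∈ s, dist (x i) u) (∑ i ∈ s, dist (x i) v) with h | h
  · nlinarith
  · nlinarith
end

section
/- Greedy selection achieves a 2-approximation for the bottleneck (minimum pairwise distance) diversity: if the greedy algorithm selects N points from a finite metric space Ŝ, the minimum pairwise distance of the selected set is at least half the maximum over all N-element subsets of Ŝ of the minimum pairwise distance. -/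
open Finset

/-- Greedy (farthest-point) selection achieves a 2-approximation for the bottleneck
(minimum pairwise distance) diversity: every pairwise distance of the greedy set is
at least half the bottleneck of any `N`-element subset of the ground set. -/
theorem greedy_bottleneck_two_approx {X : Type*} [MetricSpace X] (N : ℕ) (hN : 2 ≤ N)
    (Shat : Finset X) (x : Fin N → X)
    (hmem : ∀ k, x k ∈ Shat)
    (hgreedy : ∀ k : Fin N,
      ∀ hk : (Finset.univ.filter (fun i : Fin N => i < k)).Nonempty,
      ∀ y ∈ Shat,
        (Finset.univ.filter (fun i : Fin N => i < k)).inf' hk (fun i => dist (x i) y) ≤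
        (Finset.univ.filter (fun i : Fin N => i < k)).inf' hk (fun i => dist (x i) (x k)))
    (s : Fin N → X) (hs : ∀ i, s i ∈ Shat) (hinj : Function.Injective s)
    (b : ℝ) (hb : ∀ i j : Fin N, i ≠ j → b ≤ dist (s i) (s j)) :
    ∀ i j : Fin N, i ≠ j → b / 2 ≤ dist (x i) (x j) := by
  have key : ∀ i j : Fin N, i < j → b / 2 ≤ dist (x i) (x j) := by
    intro i j hij
    by_contra hlt
    push_neg at hlt
    have hne : (Finset.univ.filter (fun i' : Fin N => i' < j)).Nonempty :=
      ⟨i, by simp [hij]⟩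
    have hclose : ∀ p : Fin N, ∃ i' ∈ Finset.univ.filter (fun i'' : Fin N => i'' < j),
        dist (x i') (s p) < b / 2 := by
      intro p
      have h1 := hgreedy j hne (s p) (hs p)
      have h2 : (Finset.univ.filter (fun i' : Fin N => i' < j)).inf' hne
          (fun i' => dist (x i') (x j)) ≤ dist (x i) (x j) :=
        Finset.inf'_le _ (by simp [hij])
      have h3 : (Finset.univ.filter (fun i' : Fin N => i' < j)).inf' hne
          (fun i' => dist (x i') (s p)) < b / 2 := lt_of_le_of_lt (h1.trans h2) hlt
      rwa [Finset.inf'_lt_iff] at h3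
    choose f hf hfd using hclose
    have hcard : (Finset.univ.filter (fun i' : Fin N => i' < j)).card <
        (Finset.univ : Finset (Fin N)).card := by
      apply Finset.card_lt_card
      constructor
      · exact Finset.filter_subset _ _
      · intro hsub
        have := hsub (Finset.mem_univ j)
        simp at this
    obtain ⟨p, _, q, _, hpq, heq⟩ :=
      Finset.exists_ne_map_eq_of_card_lt_of_maps_to hcard (fun p _ => hf p)
    have hlt' : dist (s p) (s q) < b := by
      calc dist (s p) (s q) ≤ dist (s p) (x (f p)) + dist (x (f p)) (s q) :=
            dist_triangle _ _ _
        _ < b / 2 + b / 2 := by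
            rw [dist_comm (s p)]
            exact add_lt_add (hfd p) (by rw [heq]; exact hfd q)
        _ = b := by ring
    exact absurd (hb p q hpq) (not_le.mpr hlt')
  intro i j hij
  rcases hij.lt_or_gt with h | h
  · exact key i j h
  · rw [dist_comm]; exact key j i h
end

section
/- The SumDiameter measure ∑_i max_{j≠i} D(x_i, x_j) does not satisfy uniqueness: for the set {0, 1, 2} on the real line, replacing 1 with a second copy of 0 yields {0, 0, 2} with strictly larger SumDiameter (6 versus 5). -/
open Finset

/-- SumDiameter of a 3-element multiset of reals: `∑_i max_{j ≠ i} |x_i - x_j|`,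
the maximum ranging over the other occurrences. -/
noncomputable def sumDiameter3 (f : Fin 3 → ℝ) : ℝ :=
  ∑ i, (Finset.univ.filter (fun j : Fin 3 => j ≠ i)).sup'
    (by
      obtain ⟨y, hy⟩ := exists_ne i
      exact ⟨y, by simp [hy]⟩)
    (fun j => |f i - f j|)

theorem sumDiameter3_eq (f : Fin 3 → ℝ) :
    sumDiameter3 f =
      max |f 0 - f 1| |f 0 - f 2| + max |f 1 - f 0| |f 1 - f 2| +
        max |f 2 - f 0| |f 2 - f 1| := by
  have others_zero : univ.erase (0 : Fin 3) = {1, 2} := by decide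
  have others_one : univ.erase (1 : Fin 3) = {0, 2} := by decide
  have others_two : univ.erase (2 : Fin 3) = {0, 1} := by decide
  simp only [sumDiameter3, ne_eq, filter_ne', Fin.sum_univ_three, Fin.isValue, others_zero,
    others_one, others_two, singleton_nonempty, sup'_insert, sup'_singleton]

theorem sumDiameter3_zero_one_two : sumDiameter3 ![0, 1, 2] = 5 := by
  rw [sumDiameter3_eq]
  norm_num [abs_of_nonneg, abs_of_nonpos, Matrix.cons_val_two]

theorem sumDiameter3_zero_zero_two : sumDiameter3 ![0, 0, 2] = 6 := by
  rw [sumDiameter3_eq]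
  norm_num [abs_of_nonneg, abs_of_nonpos, Matrix.cons_val_two]

/-- SumDiameter does not satisfy uniqueness: for `{0,1,2}`, replacing `1` by a second
copy of `0` yields `{0,0,2}` with strictly larger SumDiameter (`6` vs `5`). -/
theorem sumDiameter_not_unique :
    sumDiameter3 ![0, 1, 2] = 5 ∧
    sumDiameter3 ![0, 0, 2] = 6 ∧
    sumDiameter3 ![0, 1, 2] < sumDiameter3 ![0, 0, 2] := by
  refine ⟨sumDiameter3_zero_one_two, sumDiameter3_zero_zero_two, ?_⟩
  rw [sumDiameter3_zero_one_two, sumDiameter3_zero_zero_two]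
  norm_num
end

section
/- The Vendi Score does not satisfy strict monotonicity in dissimilarity: there exist 3×3 symmetric positive semidefinite similarity matrices K_1 and K_2 with unit diagonal, where K_2 has entrywise (off-diagonal) similarities greater than or equal to those of K_1 with at least one strictly greater, yet VS(K_2) > VS(K_1); concretely K_1 with off-diagonal entries (0.1, 0.8, 0.4) and K_2 with (0.2, 0.8, 0.4). -/
open Matrix

section VendiAux

/-! ### Log bounds via Taylor series -/

lemma vendi_log_ge_aux {v x y c : ℝ} (k n : ℕ) (hy : |x| = y) (hy1 : y < 1)
    (hv : 1 - x = v * 2^k) (hv0 : 0 < v)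
    (hc : (∑ i ∈ Finset.range n, x^(i+1)/(i+1)) + y^(n+1)/(1-y)
        + (k:ℝ) * 0.6931471808 ≤ -c) :
    c ≤ Real.log v := by
  have hx : |x| < 1 := by rw [hy]; exact hy1
  have h := (abs_le.1 (Real.abs_log_sub_add_sum_range_le hx n)).1
  rw [hy] at h
  have h2 : Real.log (1 - x) = Real.log v + (k:ℝ) * Real.log 2 := by
    rw [hv, Real.log_mul (ne_of_gt hv0) (by positivity), Real.log_pow]
  have hk : (k:ℝ) * Real.log 2 ≤ (k:ℝ) * 0.6931471808 :=
    mul_le_mul_of_nonneg_left Real.log_two_lt_d9.le (Nat.cast_nonneg k)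
  linarith

lemma vendi_log_le_aux {v x y c : ℝ} (k n : ℕ) (hy : |x| = y) (hy1 : y < 1)
    (hv : 1 - x = v * 2^k) (hv0 : 0 < v)
    (hc : y^(n+1)/(1-y) - (∑ i ∈ Finset.range n, x^(i+1)/(i+1))
        - (k:ℝ) * 0.6931471803 ≤ c) :
    Real.log v ≤ c := by
  have hx : |x| < 1 := by rw [hy]; exact hy1
  have h := (abs_le.1 (Real.abs_log_sub_add_sum_range_le hx n)).2
  rw [hy] at h
  have h2 : Real.log (1 - x) = Real.log v + (k:ℝ) * Real.log 2 := by
    rw [hv, Real.log_mul (ne_of_gt hv0) (by positivity), Real.log_pow]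
  have hk : (k:ℝ) * 0.6931471803 ≤ (k:ℝ) * Real.log 2 :=
    mul_le_mul_of_nonneg_left Real.log_two_gt_d9.le (Nat.cast_nonneg k)
  linarith

lemma vendi_la1 : (-3.04744672 : ℝ) ≤ Real.log 0.04748 :=
  vendi_log_ge_aux (x := 0.24032) (y := 0.24032) 4 14 (by rw [abs_of_nonneg]; norm_num)
    (by norm_num) (by norm_num) (by norm_num) (by norm_num [Finset.sum_range_succ])

lemma vendi_la2 : (-1.18162441 : ℝ) ≤ Real.log 0.30678 :=
  vendi_log_ge_aux (x := -0.22712) (y := 0.22712) 2 14 (by rw [abs_of_nonpos] <;> norm_num)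
    (by norm_num) (by norm_num) (by norm_num) (by norm_num [Finset.sum_range_succ])

lemma vendi_la3 : (-0.43738932 : ℝ) ≤ Real.log 0.64572 :=
  vendi_log_ge_aux (x := -0.29144) (y := 0.29144) 1 14 (by rw [abs_of_nonpos] <;> norm_num)
    (by norm_num) (by norm_num) (by norm_num) (by norm_num [Finset.sum_range_succ])

lemma vendi_ub1 : Real.log 0.05738 ≤ -2.85805946 :=
  vendi_log_le_aux (x := 0.08192) (y := 0.08192) 4 14 (by rw [abs_of_nonneg]; norm_num)
    (by norm_num) (by norm_num) (by norm_num) (by norm_num [Finset.sum_range_succ])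

lemma vendi_ub2 : Real.log 0.28101 ≤ -1.26936502 :=
  vendi_log_le_aux (x := -0.12404) (y := 0.12404) 2 14 (by rw [abs_of_nonpos] <;> norm_num)
    (by norm_num) (by norm_num) (by norm_num) (by norm_num [Finset.sum_range_succ])

lemma vendi_ub3 : Real.log 0.66163 ≤ -0.41304872 :=
  vendi_log_le_aux (x := -0.32326) (y := 0.32326) 1 14 (by rw [abs_of_nonpos] <;> norm_num)
    (by norm_num) (by norm_num) (by norm_num) (by norm_num [Finset.sum_range_succ])

/-! ### Bounds on negMulLog on an interval -/

lemma vendi_f_le {x a b la : ℝ} (h1 : a ≤ x) (h2 : x ≤ b) (ha : 0 < a)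
    (hla : la ≤ Real.log a) (hla0 : la ≤ 0) :
    Real.negMulLog x ≤ b * (-la) := by
  have hx0 : 0 < x := lt_of_lt_of_le ha h1
  have hlog : la ≤ Real.log x := le_trans hla (Real.log_le_log ha h1)
  have e1 : x * (-Real.log x) ≤ x * (-la) :=
    mul_le_mul_of_nonneg_left (by linarith) hx0.le
  have e2 : x * (-la) ≤ b * (-la) :=
    mul_le_mul_of_nonneg_right h2 (by linarith)
  simp only [Real.negMulLog]
  nlinarith

lemma vendi_f_ge {x a b ub : ℝ} (h1 : a ≤ x) (h2 : x ≤ b) (ha : 0 < a)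
    (hub : Real.log b ≤ ub) (hub0 : ub ≤ 0) :
    a * (-ub) ≤ Real.negMulLog x := by
  have hx0 : 0 < x := lt_of_lt_of_le ha h1
  have hlog : Real.log x ≤ ub := le_trans (Real.log_le_log hx0 h2) hub
  have e1 : x * (-ub) ≤ x * (-Real.log x) :=
    mul_le_mul_of_nonneg_left (by linarith) hx0.le
  have e2 : a * (-ub) ≤ x * (-ub) :=
    mul_le_mul_of_nonneg_right h1 (by linarith)
  simp only [Real.negMulLog]
  nlinarith

lemma vendi_fle1 {t : ℝ} (h1 : (0.04748:ℝ) ≤ t) (h2 : t ≤ 0.04749) :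
    Real.negMulLog t ≤ 0.04749 * 3.04744672 := by
  have := vendi_f_le h1 h2 (by norm_num) vendi_la1 (by norm_num)
  linarith

lemma vendi_fle2 {t : ℝ} (h1 : (0.30678:ℝ) ≤ t) (h2 : t ≤ 0.30679) :
    Real.negMulLog t ≤ 0.30679 * 1.18162441 := by
  have := vendi_f_le h1 h2 (by norm_num) vendi_la2 (by norm_num)
  linarith

lemma vendi_fle3 {t : ℝ} (h1 : (0.64572:ℝ) ≤ t) (h2 : t ≤ 0.64573) :
    Real.negMulLog t ≤ 0.64573 * 0.43738932 := by
  have := vendi_f_le h1 h2 (by norm_num) vendi_la3 (by norm_num)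
  linarith

lemma vendi_fge1 {t : ℝ} (h1 : (0.05737:ℝ) ≤ t) (h2 : t ≤ 0.05738) :
    0.05737 * 2.85805946 ≤ Real.negMulLog t := by
  have := vendi_f_ge h1 h2 (by norm_num) vendi_ub1 (by norm_num)
  linarith

lemma vendi_fge2 {t : ℝ} (h1 : (0.28100:ℝ) ≤ t) (h2 : t ≤ 0.28101) :
    0.28100 * 1.26936502 ≤ Real.negMulLog t := by
  have := vendi_f_ge h1 h2 (by norm_num) vendi_ub2 (by norm_num)
  linarith

lemma vendi_fge3 {t : ℝ} (h1 : (0.66162:ℝ) ≤ t) (h2 : t ≤ 0.66163) :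
    0.66162 * 0.41304872 ≤ Real.negMulLog t := by
  have := vendi_f_ge h1 h2 (by norm_num) vendi_ub3 (by norm_num)
  linarith

/-! ### Root localization -/

lemma vendi_loc1 (x : ℝ) (hx : x^3 - x^2 + (73/300)*x - 127/13500 = 0) :
    ((0.04748:ℝ) ≤ x ∧ x ≤ 0.04749) ∨ ((0.30678:ℝ) ≤ x ∧ x ≤ 0.30679) ∨
    ((0.64572:ℝ) ≤ x ∧ x ≤ 0.64573) := by
  rcases le_or_gt x 0.04748 with h1 | h1
  · exfalso
    have h2 : (0:ℝ) ≤ 73/300 - (1 - 0.04748) * (x + 0.04748) := by nlinarith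
    nlinarith [mul_nonneg (sub_nonneg.2 h1) (sq_nonneg x), mul_nonneg (sub_nonneg.2 h1) h2]
  rcases le_or_gt x 0.04749 with h2 | h2
  · exact Or.inl ⟨h1.le, h2⟩
  rcases le_or_gt x 0.30678 with h3 | h3
  · exfalso
    nlinarith [mul_nonneg (sub_nonneg.2 h2.le) (sub_nonneg.2 h3), sq_nonneg x,
      mul_nonneg (mul_nonneg (sub_nonneg.2 h2.le) (sub_nonneg.2 h3)) (sq_nonneg x)]
  rcases le_or_gt x 0.30679 with h4 | h4
  · exact Or.inr (Or.inl ⟨h3.le, h4⟩)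
  rcases le_or_gt x 0.64572 with h5 | h5
  · exfalso
    nlinarith [mul_nonneg (sub_nonneg.2 h4.le) (sub_nonneg.2 h5), sq_nonneg x,
      mul_nonneg (mul_nonneg (sub_nonneg.2 h4.le) (sub_nonneg.2 h5)) (sq_nonneg x)]
  rcases le_or_gt x 0.64573 with h6 | h6
  · exact Or.inr (Or.inr ⟨h5.le, h6⟩)
  · exfalso
    have h7 : (0:ℝ) ≤ x^2 + (0.64573 - 1)*x + (0.64573^2 - 0.64573 + 73/300) := by nlinarith
    nlinarith [mul_nonneg (sub_nonneg.2 h6.le) h7]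

lemma vendi_loc2 (x : ℝ) (hx : x^3 - x^2 + (6/25)*x - 4/375 = 0) :
    ((0.05737:ℝ) ≤ x ∧ x ≤ 0.05738) ∨ ((0.28100:ℝ) ≤ x ∧ x ≤ 0.28101) ∨
    ((0.66162:ℝ) ≤ x ∧ x ≤ 0.66163) := by
  rcases le_or_gt x 0.05737 with h1 | h1
  · exfalso
    have h2 : (0:ℝ) ≤ 6/25 - (1 - 0.05737) * (x + 0.05737) := by nlinarith
    nlinarith [mul_nonneg (sub_nonneg.2 h1) (sq_nonneg x), mul_nonneg (sub_nonneg.2 h1) h2]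
  rcases le_or_gt x 0.05738 with h2 | h2
  · exact Or.inl ⟨h1.le, h2⟩
  rcases le_or_gt x 0.28100 with h3 | h3
  · exfalso
    nlinarith [mul_nonneg (sub_nonneg.2 h2.le) (sub_nonneg.2 h3), sq_nonneg x,
      mul_nonneg (mul_nonneg (sub_nonneg.2 h2.le) (sub_nonneg.2 h3)) (sq_nonneg x)]
  rcases le_or_gt x 0.28101 with h4 | h4
  · exact Or.inr (Or.inl ⟨h3.le, h4⟩)
  rcases le_or_gt x 0.66162 with h5 | h5
  · exfalso
    nlinarith [mul_nonneg (sub_nonneg.2 h4.le) (sub_nonneg.2 h5), sq_nonneg x,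
      mul_nonneg (mul_nonneg (sub_nonneg.2 h4.le) (sub_nonneg.2 h5)) (sq_nonneg x)]
  rcases le_or_gt x 0.66163 with h6 | h6
  · exact Or.inr (Or.inr ⟨h5.le, h6⟩)
  · exfalso
    have h7 : (0:ℝ) ≤ x^2 + (0.66163 - 1)*x + (0.66163^2 - 0.66163 + 6/25) := by nlinarith
    nlinarith [mul_nonneg (sub_nonneg.2 h6.le) h7]

/-! ### Pigeonhole + entropy bounds -/

lemma vendi_sum_le_1 {x y z : ℝ}
    (hx : ((0.04748:ℝ) ≤ x ∧ x ≤ 0.04749) ∨ ((0.30678:ℝ) ≤ x ∧ x ≤ 0.30679) ∨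
      ((0.64572:ℝ) ≤ x ∧ x ≤ 0.64573))
    (hy : ((0.04748:ℝ) ≤ y ∧ y ≤ 0.04749) ∨ ((0.30678:ℝ) ≤ y ∧ y ≤ 0.30679) ∨
      ((0.64572:ℝ) ≤ y ∧ y ≤ 0.64573))
    (hz : ((0.04748:ℝ) ≤ z ∧ z ≤ 0.04749) ∨ ((0.30678:ℝ) ≤ z ∧ z ≤ 0.30679) ∨
      ((0.64572:ℝ) ≤ z ∧ z ≤ 0.64573))
    (hsum : x + y + z = 1) :
    Real.negMulLog x + Real.negMulLog y + Real.negMulLog z ≤ 0.7897 := by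
  rcases hx with ⟨hxa, hxb⟩ | ⟨hxa, hxb⟩ | ⟨hxa, hxb⟩ <;>
  rcases hy with ⟨hya, hyb⟩ | ⟨hya, hyb⟩ | ⟨hya, hyb⟩ <;>
  rcases hz with ⟨hza, hzb⟩ | ⟨hza, hzb⟩ | ⟨hza, hzb⟩ <;>
  first
  | linarith
  | linarith [vendi_fle1 hxa hxb, vendi_fle2 hya hyb, vendi_fle3 hza hzb]
  | linarith [vendi_fle1 hxa hxb, vendi_fle3 hya hyb, vendi_fle2 hza hzb]
  | linarith [vendi_fle2 hxa hxb, vendi_fle1 hya hyb, vendi_fle3 hza hzb]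
  | linarith [vendi_fle2 hxa hxb, vendi_fle3 hya hyb, vendi_fle1 hza hzb]
  | linarith [vendi_fle3 hxa hxb, vendi_fle1 hya hyb, vendi_fle2 hza hzb]
  | linarith [vendi_fle3 hxa hxb, vendi_fle2 hya hyb, vendi_fle1 hza hzb]

lemma vendi_sum_ge_2 {x y z : ℝ}
    (hx : ((0.05737:ℝ) ≤ x ∧ x ≤ 0.05738) ∨ ((0.28100:ℝ) ≤ x ∧ x ≤ 0.28101) ∨
      ((0.66162:ℝ) ≤ x ∧ x ≤ 0.66163))
    (hy : ((0.05737:ℝ) ≤ y ∧ y ≤ 0.05738) ∨ ((0.28100:ℝ) ≤ y ∧ y ≤ 0.28101) ∨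
      ((0.66162:ℝ) ≤ y ∧ y ≤ 0.66163))
    (hz : ((0.05737:ℝ) ≤ z ∧ z ≤ 0.05738) ∨ ((0.28100:ℝ) ≤ z ∧ z ≤ 0.28101) ∨
      ((0.66162:ℝ) ≤ z ∧ z ≤ 0.66163))
    (hsum : x + y + z = 1) :
    (0.7939:ℝ) ≤ Real.negMulLog x + Real.negMulLog y + Real.negMulLog z := by
  rcases hx with ⟨hxa, hxb⟩ | ⟨hxa, hxb⟩ | ⟨hxa, hxb⟩ <;>
  rcases hy with ⟨hya, hyb⟩ | ⟨hya, hyb⟩ | ⟨hya, hyb⟩ <;>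
  rcases hz with ⟨hza, hzb⟩ | ⟨hza, hzb⟩ | ⟨hza, hzb⟩ <;>
  first
  | linarith
  | linarith [vendi_fge1 hxa hxb, vendi_fge2 hya hyb, vendi_fge3 hza hzb]
  | linarith [vendi_fge1 hxa hxb, vendi_fge3 hya hyb, vendi_fge2 hza hzb]
  | linarith [vendi_fge2 hxa hxb, vendi_fge1 hya hyb, vendi_fge3 hza hzb]
  | linarith [vendi_fge2 hxa hxb, vendi_fge3 hya hyb, vendi_fge1 hza hzb]
  | linarith [vendi_fge3 hxa hxb, vendi_fge1 hya hyb, vendi_fge2 hza hzb]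
  | linarith [vendi_fge3 hxa hxb, vendi_fge2 hya hyb, vendi_fge1 hza hzb]

/-! ### Characteristic polynomial via spectral theorem -/

lemma vendi_key {A : Matrix (Fin 3) (Fin 3) ℝ} (hA : A.IsHermitian) (x : ℝ) :
    det (A - x • 1) = ∏ i, (hA.eigenvalues i - x) := by
  have hU : (hA.eigenvectorUnitary : Matrix (Fin 3) (Fin 3) ℝ) *
      star (hA.eigenvectorUnitary : Matrix (Fin 3) (Fin 3) ℝ) = 1 :=
    (Matrix.mem_unitaryGroup_iff).mp hA.eigenvectorUnitary.2
  have hU2 : star (hA.eigenvectorUnitary : Matrix (Fin 3) (Fin 3) ℝ) *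
      (hA.eigenvectorUnitary : Matrix (Fin 3) (Fin 3) ℝ) = 1 :=
    (Matrix.mem_unitaryGroup_iff').mp hA.eigenvectorUnitary.2
  have hD : (Matrix.diagonal (RCLike.ofReal ∘ hA.eigenvalues) : Matrix (Fin 3) (Fin 3) ℝ) - x • 1
      = Matrix.diagonal (fun i => hA.eigenvalues i - x) := by
    ext i j
    by_cases h : i = j <;> simp [h, Matrix.diagonal, Matrix.one_apply]
  have h1 : A - x • 1 = (hA.eigenvectorUnitary : Matrix (Fin 3) (Fin 3) ℝ) *
      (Matrix.diagonal (fun i => hA.eigenvalues i - x)) *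
      star (hA.eigenvectorUnitary : Matrix (Fin 3) (Fin 3) ℝ) := by
    rw [← hD, Matrix.mul_sub, Matrix.mul_smul, Matrix.sub_mul, Matrix.smul_mul, mul_one, hU]
    conv_lhs => rw [hA.spectral_theorem]
    exact congrArg (· - x • (1 : Matrix (Fin 3) (Fin 3) ℝ)) (Unitary.conjStarAlgAut_apply _ _)
  rw [h1, det_mul, det_mul, det_diagonal]
  have h2 : det (star (hA.eigenvectorUnitary : Matrix (Fin 3) (Fin 3) ℝ)) *
      det (hA.eigenvectorUnitary : Matrix (Fin 3) (Fin 3) ℝ) = 1 := by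
    rw [← det_mul, hU2, det_one]
  linear_combination (∏ i, (hA.eigenvalues i - x)) * h2

end VendiAux

/-- The Vendi Score does not satisfy strict monotonicity in dissimilarity: for the
symmetric PSD unit-diagonal matrices `K₁` (off-diagonal `0.1, 0.8, 0.4`) and `K₂`
(off-diagonal `0.2, 0.8, 0.4`), all similarities of `K₂` are `≥` those of `K₁` with one
strictly greater, yet `VS(K₁) < VS(K₂)`, where `VS(K) = exp(-∑ λ_i log λ_i)` and the
`λ_i` are the eigenvalues of `K/3`. -/
theorem vendi_not_monotone :
    ∃ K₁ K₂ : Matrix (Fin 3) (Fin 3) ℝ,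
      K₁ = !![1, 0.1, 0.8; 0.1, 1, 0.4; 0.8, 0.4, 1] ∧
      K₂ = !![1, 0.2, 0.8; 0.2, 1, 0.4; 0.8, 0.4, 1] ∧
      K₁.PosSemidef ∧ K₂.PosSemidef ∧
      (∀ i, K₁ i i = 1) ∧ (∀ i, K₂ i i = 1) ∧
      (∀ i j, K₁ i j ≤ K₂ i j) ∧ (∃ i j, i ≠ j ∧ K₁ i j < K₂ i j) ∧
      ∃ (h₁ : ((3 : ℝ)⁻¹ • K₁).IsHermitian) (h₂ : ((3 : ℝ)⁻¹ • K₂).IsHermitian),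
        Real.exp (∑ i, Real.negMulLog (h₁.eigenvalues i)) <
        Real.exp (∑ i, Real.negMulLog (h₂.eigenvalues i)) := by
  refine ⟨!![1, 0.1, 0.8; 0.1, 1, 0.4; 0.8, 0.4, 1],
    !![1, 0.2, 0.8; 0.2, 1, 0.4; 0.8, 0.4, 1], rfl, rfl, ?_, ?_, ?_, ?_, ?_, ?_, ?_⟩
  · rw [Matrix.posSemidef_iff_dotProduct_mulVec]; constructor
    · show _ᴴ = _
      ext i j
      fin_cases i <;> fin_cases j <;> simp
    · intro v
      have h : star v ⬝ᵥ (!![1, 0.1, 0.8; 0.1, 1, 0.4; 0.8, 0.4, 1] : Matrix (Fin 3) (Fin 3) ℝ) *ᵥ v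
          = v 0 * (v 0 + 0.1 * v 1 + 0.8 * v 2) + v 1 * (0.1 * v 0 + v 1 + 0.4 * v 2)
            + v 2 * (0.8 * v 0 + 0.4 * v 1 + v 2) := by
        simp [dotProduct, Matrix.mulVec, Fin.sum_univ_three]
      rw [h]
      nlinarith [sq_nonneg (v 0 + 0.1 * v 1 + 0.8 * v 2), sq_nonneg (0.99 * v 1 + 0.32 * v 2),
        sq_nonneg (v 2)]
  · rw [Matrix.posSemidef_iff_dotProduct_mulVec]; constructor
    · show _ᴴ = _
      ext i j
      fin_cases i <;> fin_cases j <;> simp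
    · intro v
      have h : star v ⬝ᵥ (!![1, 0.2, 0.8; 0.2, 1, 0.4; 0.8, 0.4, 1] : Matrix (Fin 3) (Fin 3) ℝ) *ᵥ v
          = v 0 * (v 0 + 0.2 * v 1 + 0.8 * v 2) + v 1 * (0.2 * v 0 + v 1 + 0.4 * v 2)
            + v 2 * (0.8 * v 0 + 0.4 * v 1 + v 2) := by
        simp [dotProduct, Matrix.mulVec, Fin.sum_univ_three]
      rw [h]
      nlinarith [sq_nonneg (v 0 + 0.2 * v 1 + 0.8 * v 2), sq_nonneg (0.96 * v 1 + 0.24 * v 2),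
        sq_nonneg (v 2)]
  · intro i; fin_cases i <;> norm_num
  · intro i; fin_cases i <;> norm_num
  · intro i j; fin_cases i <;> fin_cases j <;> norm_num
  · exact ⟨0, 1, by decide, by norm_num⟩
  · have hA1 : ((3:ℝ)⁻¹ • !![1, 0.1, 0.8; 0.1, 1, 0.4; 0.8, 0.4, 1] :
        Matrix (Fin 3) (Fin 3) ℝ).IsHermitian := by
      show _ᴴ = _
      ext i j
      fin_cases i <;> fin_cases j <;> simp
    have hA2 : ((3:ℝ)⁻¹ • !![1, 0.2, 0.8; 0.2, 1, 0.4; 0.8, 0.4, 1] :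
        Matrix (Fin 3) (Fin 3) ℝ).IsHermitian := by
      show _ᴴ = _
      ext i j
      fin_cases i <;> fin_cases j <;> simp
    refine ⟨hA1, hA2, ?_⟩
    have hdet1 : ∀ t : ℝ, (∏ i, (hA1.eigenvalues i - t))
        = -(t^3 - t^2 + (73/300)*t - 127/13500) := by
      intro t
      rw [← vendi_key hA1 t]
      simp [Matrix.det_fin_three, Matrix.sub_apply, Matrix.smul_apply, Matrix.one_apply]
      ring
    have hdet2 : ∀ t : ℝ, (∏ i, (hA2.eigenvalues i - t))
        = -(t^3 - t^2 + (6/25)*t - 4/375) := by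
      intro t
      rw [← vendi_key hA2 t]
      simp [Matrix.det_fin_three, Matrix.sub_apply, Matrix.smul_apply, Matrix.one_apply]
      ring
    -- root equations
    have hq10 : (hA1.eigenvalues 0)^3 - (hA1.eigenvalues 0)^2
        + (73/300)*(hA1.eigenvalues 0) - 127/13500 = 0 := by
      have h := hdet1 (hA1.eigenvalues 0)
      rw [Fin.prod_univ_three] at h
      linear_combination h
    have hq11 : (hA1.eigenvalues 1)^3 - (hA1.eigenvalues 1)^2
        + (73/300)*(hA1.eigenvalues 1) - 127/13500 = 0 := by
      have h := hdet1 (hA1.eigenvalues 1)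
      rw [Fin.prod_univ_three] at h
      linear_combination h
    have hq12 : (hA1.eigenvalues 2)^3 - (hA1.eigenvalues 2)^2
        + (73/300)*(hA1.eigenvalues 2) - 127/13500 = 0 := by
      have h := hdet1 (hA1.eigenvalues 2)
      rw [Fin.prod_univ_three] at h
      linear_combination h
    have hq20 : (hA2.eigenvalues 0)^3 - (hA2.eigenvalues 0)^2
        + (6/25)*(hA2.eigenvalues 0) - 4/375 = 0 := by
      have h := hdet2 (hA2.eigenvalues 0)
      rw [Fin.prod_univ_three] at h
      linear_combination h
    have hq21 : (hA2.eigenvalues 1)^3 - (hA2.eigenvalues 1)^2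
        + (6/25)*(hA2.eigenvalues 1) - 4/375 = 0 := by
      have h := hdet2 (hA2.eigenvalues 1)
      rw [Fin.prod_univ_three] at h
      linear_combination h
    have hq22 : (hA2.eigenvalues 2)^3 - (hA2.eigenvalues 2)^2
        + (6/25)*(hA2.eigenvalues 2) - 4/375 = 0 := by
      have h := hdet2 (hA2.eigenvalues 2)
      rw [Fin.prod_univ_three] at h
      linear_combination h
    -- trace identities
    have hs1 : hA1.eigenvalues 0 + hA1.eigenvalues 1 + hA1.eigenvalues 2 = 1 := by
      have h0 := hdet1 0
      have h1 := hdet1 1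
      have hm := hdet1 (-1)
      rw [Fin.prod_univ_three] at h0 h1 hm
      linear_combination (h1 + hm - 2*h0)/2
    have hs2 : hA2.eigenvalues 0 + hA2.eigenvalues 1 + hA2.eigenvalues 2 = 1 := by
      have h0 := hdet2 0
      have h1 := hdet2 1
      have hm := hdet2 (-1)
      rw [Fin.prod_univ_three] at h0 h1 hm
      linear_combination (h1 + hm - 2*h0)/2
    rw [Fin.sum_univ_three, Fin.sum_univ_three]
    apply Real.exp_lt_exp.2
    have b1 := vendi_sum_le_1 (vendi_loc1 _ hq10) (vendi_loc1 _ hq11)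
      (vendi_loc1 _ hq12) hs1
    have b2 := vendi_sum_ge_2 (vendi_loc2 _ hq20) (vendi_loc2 _ hq21)
      (vendi_loc2 _ hq22) hs2
    linarith
end
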